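/- Let ν > 0 and L ≥ ν (so L^2 ≥ ν^2). Define h(μ) = (1 + νμ)(1 − 2μν + L^2 μ^2). Then h(μ) < 1 for all μ in the open interval (0, (−L^2 + 2ν^2 + sqrt(L^4 + 4ν^4)) / (2νL^2)). -/
import Mathlib

/-- With `ν > 0`, `L ≥ ν`, the function `h(μ) = (1+νμ)(1−2μν+L²μ²)` satisfies `h(μ) < 1`
for all `μ` in the open interval `(0, (−L²+2ν²+√(L⁴+4ν⁴))/(2νL²))`. -/
theorem stmt5 (ν L : ℝ) (hν : 0 < ν) (hL : ν ≤ L) :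
    ∀ μ : ℝ, 0 < μ → μ < (-L^2 + 2*ν^2 + Real.sqrt (L^4 + 4*ν^4)) / (2*ν*L^2) →
      (1 + ν*μ) * (1 - 2*μ*ν + L^2*μ^2) < 1 := by
  intro μ hμ0 hμ1
  have hL0 : 0 < L := lt_of_lt_of_le hν hL
  have hden : 0 < 2*ν*L^2 := by positivity
  have hs0 : 0 ≤ Real.sqrt (L^4 + 4*ν^4) := Real.sqrt_nonneg _
  have hs : Real.sqrt (L^4 + 4*ν^4)^2 = L^4 + 4*ν^4 := Real.sq_sqrt (by positivity)
  have ht : μ * (2*ν*L^2) < -L^2 + 2*ν^2 + Real.sqrt (L^4 + 4*ν^4) :=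
    (lt_div_iff₀ hden).mp hμ1
  -- t = 2νL²μ + L² − 2ν² satisfies −s < t < s, hence t² < s²
  have hlow : -(Real.sqrt (L^4 + 4*ν^4)) < 2*ν*L^2*μ + (L^2 - 2*ν^2) := by
    have h2 : 2*ν^2 ≤ Real.sqrt (L^4 + 4*ν^4) := by
      nlinarith [sq_nonneg (Real.sqrt (L^4 + 4*ν^4) - 2*ν^2), sq_nonneg L]
    nlinarith [mul_pos hden hμ0, sq_nonneg (L-ν), sq_nonneg (L+ν)]
  have hhigh : 2*ν*L^2*μ + (L^2 - 2*ν^2) < Real.sqrt (L^4 + 4*ν^4) := by linarith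
  have hsq : (2*ν*L^2*μ + (L^2 - 2*ν^2))^2 < L^4 + 4*ν^4 := by
    nlinarith [mul_pos (sub_pos.mpr hhigh) (by linarith : (0:ℝ) < Real.sqrt (L^4 + 4*ν^4) + (2*ν*L^2*μ + (L^2 - 2*ν^2)))]
  nlinarith [mul_pos hν (mul_pos (pow_pos hL0 2) hμ0), hsq]
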